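/- Let n ≥ 2 and let s : S_n → UVB_n be the homomorphism with s((i, i+1)) = ρ_i. Then for every permutation π ∈ S_n and all indices 1 ≤ i ≠ j ≤ n, one has s(π) · λ_{i,j} · s(π)^{−1} = λ_{π(i),π(j)} in UVB_n. -/
import Mathlib


/-!  Common setup: the unrestricted virtual braid group `UVB n`, its generators
σ_k, ρ_k (1-based indices), the elements λ_{i,j} and B_{i,j}, the permutation
homomorphism ι (characterized by `IsIota`), the section s : S_n → UVB n
(characterized by `IsPermSection`), and fused Markov equivalence. -/

/-- Generators of the unrestricted virtual braid group `UVB n`: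
`Sum.inl i` is the classical generator σ_{i+1} and `Sum.inr i` is the virtual
generator ρ_{i+1}, for `i : Fin (n-1)` (so the 1-based indices are `1, …, n-1`). -/
abbrev UVBGen (n : ℕ) := Sum (Fin (n - 1)) (Fin (n - 1))

namespace UVBGen
def sg {n : ℕ} (i : Fin (n - 1)) : FreeGroup (UVBGen n) := FreeGroup.of (Sum.inl i)
def rg {n : ℕ} (i : Fin (n - 1)) : FreeGroup (UVBGen n) := FreeGroup.of (Sum.inr i)
end UVBGen

open UVBGen in
/-- The defining relations of the unrestricted virtual braid group. -/
def uvbRels (n : ℕ) : Set (FreeGroup (UVBGen n)) :=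
  {r | (∃ i j : Fin (n - 1), (j : ℕ) = (i : ℕ) + 1 ∧
          (r = sg i * sg j * sg i * (sg j * sg i * sg j)⁻¹ ∨
           r = rg i * rg j * rg i * (rg j * rg i * rg j)⁻¹ ∨
           r = rg i * rg j * sg i * (sg j * rg i * rg j)⁻¹ ∨
           r = rg i * sg j * sg i * (sg j * sg i * rg j)⁻¹ ∨
           r = rg j * sg i * sg j * (sg i * sg j * rg i)⁻¹)) ∨
       (∃ i j : Fin (n - 1), ((i : ℕ) + 2 ≤ (j : ℕ) ∨ (j : ℕ) + 2 ≤ (i : ℕ)) ∧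
          (r = sg i * sg j * (sg j * sg i)⁻¹ ∨
           r = rg i * rg j * (rg j * rg i)⁻¹ ∨
           r = sg i * rg j * (rg j * sg i)⁻¹)) ∨
       (∃ i : Fin (n - 1), r = rg i * rg i)}

/-- The unrestricted virtual braid group on `n` strands. -/
abbrev UVB (n : ℕ) := PresentedGroup (uvbRels n)

namespace UVB

/-- The generator σ_k (1-based index; meaningful for `1 ≤ k ≤ n-1`, junk value `1` otherwise). -/
def sigma (n k : ℕ) : UVB n :=
  if h : 1 ≤ k ∧ k ≤ n - 1 then PresentedGroup.of (Sum.inl ⟨k - 1, by omega⟩) else 1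

/-- The generator ρ_k (1-based index; meaningful for `1 ≤ k ≤ n-1`, junk value `1` otherwise). -/
def rho (n k : ℕ) : UVB n :=
  if h : 1 ≤ k ∧ k ≤ n - 1 then PresentedGroup.of (Sum.inr ⟨k - 1, by omega⟩) else 1

/-- The element λ_{i,j} of `UVB n` (1-based indices `1 ≤ i ≠ j ≤ n`; junk value `1` if `i = j`).
For `i < j`:  `λ_{i,j} = ρ_{j-1}⋯ρ_{i+1} · ρ_i σ_i⁻¹ · ρ_{i+1}⋯ρ_{j-1}` and
`λ_{j,i} = ρ_{j-1}⋯ρ_{i+1} · σ_i⁻¹ ρ_i · ρ_{i+1}⋯ρ_{j-1}`. -/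
def lam (n i j : ℕ) : UVB n :=
  if i < j then
    (((List.range' (i + 1) (j - 1 - i)).reverse.map (rho n)).prod) *
      (rho n i * (sigma n i)⁻¹) *
      (((List.range' (i + 1) (j - 1 - i)).map (rho n)).prod)
  else if j < i then
    (((List.range' (j + 1) (i - 1 - j)).reverse.map (rho n)).prod) *
      ((sigma n j)⁻¹ * rho n j) *
      (((List.range' (j + 1) (i - 1 - j)).map (rho n)).prod)
  else 1

/-- The element `B_{i,j} = ρ_{j-1}ρ_{j-2}⋯ρ_{i+1}ρ_i` for `i < j`, and `1` otherwise. -/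
def B (n i j : ℕ) : UVB n :=
  if i < j then ((List.range' i (j - i)).reverse.map (rho n)).prod else 1

/-- The subgroup `U_j` of `UVB n` generated by `{λ_{i,j}, λ_{j,i} : 1 ≤ i < j}`. -/
def U (n j : ℕ) : Subgroup (UVB n) :=
  Subgroup.closure {x | ∃ i, 1 ≤ i ∧ i < j ∧ (x = lam n i j ∨ x = lam n j i)}

end UVB

/-- `ι : UVB n →* S_n` is the homomorphism sending σ_k and ρ_k to the
transposition (k, k+1) (written 0-based on `Fin n`). -/
def IsIota (n : ℕ) (ι : UVB n →* Equiv.Perm (Fin n)) : Prop :=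
  ∀ (k : ℕ) (h1 : 1 ≤ k) (h2 : k ≤ n - 1),
    ι (UVB.sigma n k) = Equiv.swap ⟨k - 1, by omega⟩ ⟨k, by omega⟩ ∧
    ι (UVB.rho n k) = Equiv.swap ⟨k - 1, by omega⟩ ⟨k, by omega⟩

/-- `s : S_n →* UVB n` is the homomorphism sending the transposition (k, k+1) to ρ_k. -/
def IsPermSection (n : ℕ) (s : Equiv.Perm (Fin n) →* UVB n) : Prop :=
  ∀ (k : ℕ) (h1 : 1 ≤ k) (h2 : k ≤ n - 1),
    s (Equiv.swap ⟨k - 1, by omega⟩ ⟨k, by omega⟩) = UVB.rho n k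

/-- The number of orbits of a permutation of `Fin n`
(= number of fixed points + number of nontrivial cycles). -/
def numOrbits {n : ℕ} (π : Equiv.Perm (Fin n)) : ℕ :=
  (Finset.univ.filter fun x => π x = x).card + π.cycleType.card

namespace UVB

private def embedGen (n : ℕ) : UVBGen n → UVBGen (n + 1)
  | Sum.inl i => Sum.inl ⟨i.val, by have := i.isLt; omega⟩
  | Sum.inr i => Sum.inr ⟨i.val, by have := i.isLt; omega⟩

open UVBGen in
/-- The natural inclusion `UVB n →* UVB (n+1)` (σ_k ↦ σ_k, ρ_k ↦ ρ_k). -/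
def incl (n : ℕ) : UVB n →* UVB (n + 1) :=
  PresentedGroup.toGroup (f := fun x => PresentedGroup.of (embedGen n x)) (by
    have key : (FreeGroup.lift fun x => (PresentedGroup.of (embedGen n x) : UVB (n + 1)))
        = (PresentedGroup.mk (uvbRels (n + 1))).comp (FreeGroup.map (embedGen n)) := by
      ext x
      simp [PresentedGroup.of]
    intro r hr
    rw [key]
    simp only [MonoidHom.comp_apply]
    have hmem : FreeGroup.map (embedGen n) r ∈ uvbRels (n + 1) := by
      have hsg : ∀ i : Fin (n - 1), FreeGroup.map (embedGen n) (sg i)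
          = sg (⟨i.val, by have := i.isLt; omega⟩ : Fin (n + 1 - 1)) := by
        intro i; simp [sg, embedGen]
      have hrg : ∀ i : Fin (n - 1), FreeGroup.map (embedGen n) (rg i)
          = rg (⟨i.val, by have := i.isLt; omega⟩ : Fin (n + 1 - 1)) := by
        intro i; simp [rg, embedGen]
      rcases hr with ⟨i, j, hij, hc⟩ | ⟨i, j, hij, hc⟩ | ⟨i, hc⟩
      · refine Or.inl ⟨⟨i.val, by have := i.isLt; omega⟩, ⟨j.val, by have := j.isLt; omega⟩,
          by simpa using hij, ?_⟩
        rcases hc with h | h | h | h | h <;> subst h <;>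
          simp only [map_mul, map_inv, hsg, hrg] <;> tauto
      · refine Or.inr (Or.inl ⟨⟨i.val, by have := i.isLt; omega⟩, ⟨j.val, by have := j.isLt; omega⟩,
          by simpa using hij, ?_⟩)
        rcases hc with h | h | h <;> subst h <;>
          simp only [map_mul, map_inv, hsg, hrg] <;> tauto
      · refine Or.inr (Or.inr ⟨⟨i.val, by have := i.isLt; omega⟩, ?_⟩)
        subst hc
        simp only [map_mul, hsg, hrg]
    exact (QuotientGroup.eq_one_iff _).mpr (Subgroup.subset_normalClosure hmem))

end UVB

/-- The elementary fused Markov moves on the disjoint union of the groups `UVB n`: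
conjugation, and the three right stabilizations (positive, negative, virtual). -/
inductive MarkovBase : (Σ n, UVB n) → (Σ n, UVB n) → Prop
  | conj (n : ℕ) (α γ : UVB n) : MarkovBase ⟨n, α⟩ ⟨n, γ * α * γ⁻¹⟩
  | stabPos (n : ℕ) (α : UVB n) :
      MarkovBase ⟨n, α⟩ ⟨n + 1, UVB.incl n α * UVB.sigma (n + 1) n⟩
  | stabNeg (n : ℕ) (α : UVB n) :
      MarkovBase ⟨n, α⟩ ⟨n + 1, UVB.incl n α * (UVB.sigma (n + 1) n)⁻¹⟩
  | stabVirt (n : ℕ) (α : UVB n) :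
      MarkovBase ⟨n, α⟩ ⟨n + 1, UVB.incl n α * UVB.rho (n + 1) n⟩

/-- Fused Markov equivalence: the smallest equivalence relation generated by the
elementary Markov moves.  By Kamada's theorem, two unrestricted virtual braids are
fused Markov equivalent iff their closures are equivalent fused links. -/
def Markov : (Σ n, UVB n) → (Σ n, UVB n) → Prop := Relation.EqvGen MarkovBase


/-! ### Auxiliary lemmas for Statement 3 -/

namespace UVB
variable {n : ℕ}
open UVBGen

lemma mk_rel {r : FreeGroup (UVBGen n)} (h : r ∈ uvbRels n) :
    PresentedGroup.mk (uvbRels n) r = 1 :=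
  (QuotientGroup.eq_one_iff _).mpr (Subgroup.subset_normalClosure h)

lemma mk_eq {a b : FreeGroup (UVBGen n)} (h : a * b⁻¹ ∈ uvbRels n) :
    PresentedGroup.mk (uvbRels n) a = PresentedGroup.mk (uvbRels n) b := by
  have := mk_rel h
  rw [map_mul, map_inv, mul_inv_eq_one] at this
  exact this

lemma rho_mk {k : ℕ} (h1 : 1 ≤ k) (h2 : k ≤ n - 1) :
    rho n k = PresentedGroup.mk (uvbRels n) (rg ⟨k - 1, by omega⟩) := by
  rw [rho, dif_pos ⟨h1, h2⟩]; rfl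

lemma sigma_mk {k : ℕ} (h1 : 1 ≤ k) (h2 : k ≤ n - 1) :
    sigma n k = PresentedGroup.mk (uvbRels n) (sg ⟨k - 1, by omega⟩) := by
  rw [sigma, dif_pos ⟨h1, h2⟩]; rfl

lemma rho_out {k : ℕ} (h : ¬ (1 ≤ k ∧ k ≤ n - 1)) : rho n k = 1 := by
  rw [rho, dif_neg h]

lemma rho_rho (k : ℕ) : rho n k * rho n k = 1 := by
  by_cases h : 1 ≤ k ∧ k ≤ n - 1
  · rw [rho_mk h.1 h.2, ← map_mul]
    exact mk_rel (Or.inr (Or.inr ⟨_, rfl⟩))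
  · rw [rho_out h]; simp

lemma rho_inv (k : ℕ) : (rho n k)⁻¹ = rho n k := by
  rw [inv_eq_iff_mul_eq_one, rho_rho]

lemma braid_rho {k : ℕ} (h1 : 1 ≤ k) (h2 : k + 1 ≤ n - 1) :
    rho n k * rho n (k + 1) * rho n k = rho n (k + 1) * rho n k * rho n (k + 1) := by
  rw [rho_mk h1 (by omega), rho_mk (by omega : 1 ≤ k + 1) h2, ← map_mul, ← map_mul,
    ← map_mul, ← map_mul]
  exact mk_eq (Or.inl ⟨⟨k - 1, by omega⟩, ⟨k + 1 - 1, by omega⟩, by simp; omega,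
    Or.inr (Or.inl rfl)⟩)

lemma rel3 {k : ℕ} (h1 : 1 ≤ k) (h2 : k + 1 ≤ n - 1) :
    rho n k * rho n (k + 1) * sigma n k = sigma n (k + 1) * rho n k * rho n (k + 1) := by
  rw [rho_mk h1 (by omega), rho_mk (by omega : 1 ≤ k + 1) h2, sigma_mk h1 (by omega),
    sigma_mk (by omega : 1 ≤ k + 1) h2, ← map_mul, ← map_mul, ← map_mul, ← map_mul]
  exact mk_eq (Or.inl ⟨⟨k - 1, by omega⟩, ⟨k + 1 - 1, by omega⟩, by simp; omega,
    Or.inr (Or.inr (Or.inl rfl))⟩)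

lemma comm_rho_rho {k m : ℕ} (h : k + 2 ≤ m ∨ m + 2 ≤ k) :
    rho n k * rho n m = rho n m * rho n k := by
  by_cases hk : 1 ≤ k ∧ k ≤ n - 1
  · by_cases hm : 1 ≤ m ∧ m ≤ n - 1
    · rw [rho_mk hk.1 hk.2, rho_mk hm.1 hm.2, ← map_mul, ← map_mul]
      exact mk_eq (Or.inr (Or.inl ⟨⟨k - 1, by omega⟩, ⟨m - 1, by omega⟩,
        by simp; omega, Or.inr (Or.inl rfl)⟩))
    · rw [rho_out hm]; simp
  · rw [rho_out hk]; simp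

lemma comm_sigma_rho {k m : ℕ} (h : k + 2 ≤ m ∨ m + 2 ≤ k) :
    sigma n k * rho n m = rho n m * sigma n k := by
  by_cases hk : 1 ≤ k ∧ k ≤ n - 1
  · by_cases hm : 1 ≤ m ∧ m ≤ n - 1
    · rw [sigma_mk hk.1 hk.2, rho_mk hm.1 hm.2, ← map_mul, ← map_mul]
      exact mk_eq (Or.inr (Or.inl ⟨⟨k - 1, by omega⟩, ⟨m - 1, by omega⟩,
        by simp; omega, Or.inr (Or.inr rfl)⟩))
    · rw [rho_out hm]; simp
  · rw [sigma, dif_neg hk]; simp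


lemma lam_succ (i : ℕ) : lam n i (i + 1) = rho n i * (sigma n i)⁻¹ := by
  have : i + 1 - 1 - i = 0 := by omega
  simp [lam, this]

lemma lam_succ' (i : ℕ) : lam n (i + 1) i = (sigma n i)⁻¹ * rho n i := by
  have : i + 1 - 1 - i = 0 := by omega
  simp [lam, this]

lemma lam_lt_rec {i j : ℕ} (hij : i + 1 < j) :
    lam n i j = rho n (j - 1) * lam n i (j - 1) * rho n (j - 1) := by
  have h1 : i < j := by omega
  have h2 : i < j - 1 := by omega
  have h3 : j - 1 - i = (j - 1 - 1 - i) + 1 := by omega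
  have h4 : i + 1 + (j - 1 - 1 - i) = j - 1 := by omega
  rw [lam, if_pos h1, lam, if_pos h2, h3, List.range'_1_concat, h4]
  simp only [List.reverse_append, List.reverse_cons, List.reverse_nil, List.nil_append,
    List.cons_append, List.map_cons, List.map_append, List.prod_cons, List.prod_append,
    List.map_nil, List.prod_nil, List.singleton_append]
  group

lemma lam_gt_rec {i j : ℕ} (hij : i + 1 < j) :
    lam n j i = rho n (j - 1) * lam n (j - 1) i * rho n (j - 1) := by
  have h1 : ¬ j < i := by omega
  have h2 : i < j := by omega
  have h2' : ¬ j - 1 < i := by omega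
  have h2'' : i < j - 1 := by omega
  have h3 : j - 1 - i = (j - 1 - 1 - i) + 1 := by omega
  have h4 : i + 1 + (j - 1 - 1 - i) = j - 1 := by omega
  rw [lam, if_neg h1, if_pos h2, lam, if_neg h2', if_pos h2'', h3, List.range'_1_concat, h4]
  simp only [List.reverse_append, List.reverse_cons, List.reverse_nil, List.nil_append,
    List.cons_append, List.map_cons, List.map_append, List.prod_cons, List.prod_append,
    List.map_nil, List.prod_nil, List.singleton_append]
  group

variable {n : ℕ}

/-- `tau k` is the transposition of `k` and `k+1` on 1-based natural indices. -/
def tau (k x : ℕ) : ℕ := if x = k then k + 1 else if x = k + 1 then k else x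

lemma rr_cancel (k : ℕ) (x : UVB n) : rho n k * (rho n k * x) = x := by
  rw [← mul_assoc, rho_rho, one_mul]

lemma braid' {k : ℕ} (h1 : 1 ≤ k) (h2 : k + 1 ≤ n - 1) (x : UVB n) :
    rho n k * (rho n (k + 1) * (rho n k * x)) =
      rho n (k + 1) * (rho n k * (rho n (k + 1) * x)) := by
  rw [← mul_assoc, ← mul_assoc, ← mul_assoc, ← mul_assoc, braid_rho h1 h2]

lemma braid_tail {k : ℕ} (h1 : 1 ≤ k) (h2 : k + 1 ≤ n - 1) :
    rho n k * (rho n (k + 1) * rho n k) = rho n (k + 1) * (rho n k * rho n (k + 1)) := by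
  rw [← mul_assoc, ← mul_assoc, braid_rho h1 h2]

lemma sigma_inv_rel {t : ℕ} (h1 : 1 ≤ t) (h2 : t + 1 ≤ n - 1) :
    (sigma n (t + 1))⁻¹ =
      rho n t * rho n (t + 1) * (sigma n t)⁻¹ * rho n (t + 1) * rho n t := by
  have e : sigma n (t + 1) = rho n t * rho n (t + 1) * sigma n t * rho n (t + 1) * rho n t := by
    rw [rel3 h1 h2]
    simp only [mul_assoc, rr_cancel, rho_rho, mul_one]
  rw [e]
  simp [mul_inv_rev, rho_inv, mul_assoc]

lemma lemA {t : ℕ} (h1 : 1 ≤ t) (h2 : t + 1 ≤ n - 1) :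
    rho n t * (rho n (t + 1) * (sigma n (t + 1))⁻¹) * rho n t =
      rho n (t + 1) * (rho n t * (sigma n t)⁻¹) * rho n (t + 1) := by
  rw [sigma_inv_rel h1 h2]
  simp only [mul_assoc]
  rw [rho_rho, mul_one, braid' h1 h2, rr_cancel]

lemma lemB {t : ℕ} (h1 : 1 ≤ t) (h2 : t + 1 ≤ n - 1) :
    rho n t * ((sigma n (t + 1))⁻¹ * rho n (t + 1)) * rho n t =
      rho n (t + 1) * ((sigma n t)⁻¹ * rho n t) * rho n (t + 1) := by
  rw [sigma_inv_rel h1 h2]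
  simp only [mul_assoc]
  rw [rr_cancel, ← braid' h1 h2, rho_rho, mul_one]

lemma lemC {t : ℕ} (h1 : 1 ≤ t) (h2 : t + 1 ≤ n - 1) :
    rho n t * (rho n (t + 1) * (rho n t * (sigma n t)⁻¹) * rho n (t + 1)) * rho n t =
      rho n (t + 1) * (sigma n (t + 1))⁻¹ := by
  rw [sigma_inv_rel h1 h2]
  simp only [mul_assoc]
  rw [braid' h1 h2]

lemma lemD {t : ℕ} (h1 : 1 ≤ t) (h2 : t + 1 ≤ n - 1) :
    rho n t * (rho n (t + 1) * ((sigma n t)⁻¹ * rho n t) * rho n (t + 1)) * rho n t =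
      (sigma n (t + 1))⁻¹ * rho n (t + 1) := by
  rw [sigma_inv_rel h1 h2]
  simp only [mul_assoc]
  rw [braid_tail h1 h2]

lemma conj_commute {a c : UVB n} (h : a * c = c * a) (ha : a * a = 1) : a * c * a = c := by
  rw [h, mul_assoc, ha, mul_one]

lemma conj_cancel {a L : UVB n} (ha : a * a = 1) : a * (a * L * a) * a = L := by
  calc a * (a * L * a) * a = (a * a) * L * (a * a) := by group
    _ = L := by rw [ha]; group

lemma conj_swap {a b L : UVB n} (hab : a * b = b * a) :
    a * (b * L * b) * a = b * (a * L * a) * b := by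
  calc a * (b * L * b) * a = (a * b) * L * (b * a) := by group
    _ = (b * a) * L * (a * b) := by rw [hab]
    _ = b * (a * L * a) * b := by group

lemma conj_braid {a b M : UVB n} (h : a * b * a = b * a * b) (hM : b * M * b = M) :
    a * (b * (a * M * a) * b) * a = b * (a * M * a) * b := by
  have e : a * (b * (a * M * a) * b) * a = (a * b * a) * M * (a * b * a) := by group
  rw [e, h]
  calc (b * a * b) * M * (b * a * b) = b * a * (b * M * b) * (a * b) := by group
    _ = b * (a * M * a) * b := by rw [hM]; group

variable {n : ℕ}

lemma key (d : ℕ) : ∀ k i j : ℕ, j = i + 1 + d → 1 ≤ k → k ≤ n - 1 → 1 ≤ i → j ≤ n →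
    (rho n k * lam n i j * rho n k = lam n (tau k i) (tau k j) ∧
     rho n k * lam n j i * rho n k = lam n (tau k j) (tau k i)) := by
  induction d using Nat.strong_induction_on with
  | _ d IH =>
  intro k i j hj hk1 hk2 hi1 hj2
  have hkn : k ≤ n - 1 := hk2
  rcases d with _ | e
  · -- base case : j = i + 1
    subst hj
    rw [lam_succ, lam_succ']
    by_cases hki : k = i
    · subst hki
      have t1 : tau k k = k + 1 := by unfold tau; split_ifs <;> omega
      have t2 : tau k (k + 1) = k := by unfold tau; split_ifs <;> omega
      rw [t1, t2, lam_succ, lam_succ']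
      constructor <;> simp only [mul_assoc, rr_cancel, rho_rho, mul_one]
    · by_cases hki1 : k = i + 1
      · subst hki1
        have t1 : tau (i + 1) i = i := by unfold tau; split_ifs <;> omega
        have t2 : tau (i + 1) (i + 1) = i + 2 := by unfold tau; split_ifs <;> omega
        rw [t1, t2]
        have e0 : i + 2 - 1 = i + 1 := by omega
        have r1 : lam n i (i + 2) = rho n (i + 1) * lam n i (i + 1) * rho n (i + 1) := by
          rw [lam_lt_rec (by omega), e0]
        have r2 : lam n (i + 2) i = rho n (i + 1) * lam n (i + 1) i * rho n (i + 1) := by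
          rw [lam_gt_rec (by omega), e0]
        rw [r1, r2, lam_succ, lam_succ']
        exact ⟨rfl, rfl⟩
      · by_cases hk1i : k + 1 = i
        · -- k = i - 1
          obtain rfl : i = k + 1 := hk1i.symm
          have t1 : tau k (k + 1) = k := by unfold tau; split_ifs <;> omega
          have t2 : tau k (k + 1 + 1) = k + 2 := by unfold tau; split_ifs <;> omega
          rw [t1, t2]
          have hk2' : k + 1 ≤ n - 1 := by omega
          have e0 : k + 2 - 1 = k + 1 := by omega
          have r1 : lam n k (k + 2) = rho n (k + 1) * lam n k (k + 1) * rho n (k + 1) := by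
            rw [lam_lt_rec (by omega), e0]
          have r2 : lam n (k + 2) k = rho n (k + 1) * lam n (k + 1) k * rho n (k + 1) := by
            rw [lam_gt_rec (by omega), e0]
          rw [r1, r2, lam_succ, lam_succ']
          exact ⟨lemA hk1 hk2', lemB hk1 hk2'⟩
        · -- generic commuting case
          have h : k + 2 ≤ i ∨ i + 2 ≤ k := by omega
          have h' : i + 2 ≤ k ∨ k + 2 ≤ i := h.symm
          have t1 : tau k i = i := by unfold tau; split_ifs <;> omega
          have t2 : tau k (i + 1) = i + 1 := by unfold tau; split_ifs <;> omega
          rw [t1, t2, lam_succ, lam_succ']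
          have hcr : Commute (rho n k) (rho n i) := comm_rho_rho h
          have hcs : Commute (rho n k) (sigma n i) := (comm_sigma_rho h').symm
          constructor
          · exact conj_commute (hcr.mul_right hcs.inv_right).eq (rho_rho k)
          · exact conj_commute (hcs.inv_right.mul_right hcr).eq (rho_rho k)
  · -- inductive step : j = i + 2 + e
    have hij1 : i + 1 < j := by omega
    by_cases hkj1 : k = j - 1
    · subst hkj1
      have t1 : tau (j - 1) i = i := by unfold tau; split_ifs <;> omega
      have t2 : tau (j - 1) j = j - 1 := by unfold tau; split_ifs <;> omega
      rw [t1, t2, lam_lt_rec hij1, lam_gt_rec hij1]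
      exact ⟨conj_cancel (rho_rho _), conj_cancel (rho_rho _)⟩
    · by_cases hkj : k = j
      · have t1 : tau k i = i := by unfold tau; split_ifs <;> omega
        have t2 : tau k j = j + 1 := by unfold tau; split_ifs <;> omega
        have e0 : j + 1 - 1 = j := by omega
        have r1 : lam n i (j + 1) = rho n j * lam n i j * rho n j := by
          rw [lam_lt_rec (show i + 1 < j + 1 by omega), e0]
        have r2 : lam n (j + 1) i = rho n j * lam n j i * rho n j := by
          rw [lam_gt_rec (show i + 1 < j + 1 by omega), e0]
        rw [t1, t2, r1, r2, hkj]
        exact ⟨rfl, rfl⟩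
      · by_cases hkj2 : k = j - 2
        · by_cases hik : i = k
          · -- i = k = j - 2
            obtain rfl : j = i + 2 := by omega
            rw [hik]
            have t1 : tau k k = k + 1 := by unfold tau; split_ifs <;> omega
            have t2 : tau k (k + 2) = k + 2 := by unfold tau; split_ifs <;> omega
            rw [t1, t2]
            have hk2' : k + 1 ≤ n - 1 := by omega
            have e0 : k + 2 - 1 = k + 1 := by omega
            have r1 : lam n k (k + 2) = rho n (k + 1) * lam n k (k + 1) * rho n (k + 1) := by
              rw [lam_lt_rec (by omega), e0]
            have r2 : lam n (k + 2) k = rho n (k + 1) * lam n (k + 1) k * rho n (k + 1) := by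
              rw [lam_gt_rec (by omega), e0]
            have r3 : lam n (k + 1) (k + 2) = rho n (k + 1) * (sigma n (k + 1))⁻¹ := lam_succ _
            have r4 : lam n (k + 2) (k + 1) = (sigma n (k + 1))⁻¹ * rho n (k + 1) := lam_succ' _
            rw [r1, r2, r3, r4, lam_succ, lam_succ']
            exact ⟨lemC hk1 hk2', lemD hk1 hk2'⟩
          · -- i < k = j - 2
            have hik' : i < k := by omega
            subst hkj2
            have t1 : tau (j - 2) i = i := by unfold tau; split_ifs <;> omega
            have t2 : tau (j - 2) j = j := by unfold tau; split_ifs <;> omega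
            rw [t1, t2]
            have hbr : rho n (j - 2) * rho n (j - 1) * rho n (j - 2) =
                rho n (j - 1) * rho n (j - 2) * rho n (j - 1) := by
              have e1 : j - 2 + 1 = j - 1 := by omega
              have := braid_rho (n := n) (k := j - 2) (by omega) (by omega)
              rwa [e1] at this
            obtain ⟨H1, H2⟩ := IH (e - 1) (by omega) (j - 1) i (j - 2) (by omega)
              (by omega) (by omega) hi1 (by omega)
            have u1 : tau (j - 1) i = i := by unfold tau; split_ifs <;> omega
            have u2 : tau (j - 1) (j - 2) = j - 2 := by unfold tau; split_ifs <;> omega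
            rw [u1, u2] at H1 H2
            have h2r : lam n i j =
                rho n (j - 1) * (rho n (j - 2) * lam n i (j - 2) * rho n (j - 2)) *
                  rho n (j - 1) := by
              rw [lam_lt_rec hij1, lam_lt_rec (show i + 1 < j - 1 by omega)]
              have : j - 1 - 1 = j - 2 := by omega
              rw [this]
            have h2r' : lam n j i =
                rho n (j - 1) * (rho n (j - 2) * lam n (j - 2) i * rho n (j - 2)) *
                  rho n (j - 1) := by
              rw [lam_gt_rec hij1, lam_gt_rec (show i + 1 < j - 1 by omega)]
              have : j - 1 - 1 = j - 2 := by omega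
              rw [this]
            rw [h2r, h2r']
            exact ⟨conj_braid hbr H1, conj_braid hbr H2⟩
        · -- k far from j-1
          have h : k + 2 ≤ j - 1 ∨ (j - 1) + 2 ≤ k := by omega
          have t2 : tau k j = j := by unfold tau; split_ifs <;> omega
          have htb : 1 ≤ tau k i ∧ tau k i + 1 < j := by unfold tau; split_ifs <;> omega
          obtain ⟨H1, H2⟩ := IH e (by omega) k i (j - 1) (by omega) hk1 hk2 hi1 (by omega)
          have u2 : tau k (j - 1) = j - 1 := by unfold tau; split_ifs <;> omega
          rw [u2] at H1 H2
          have hab : rho n k * rho n (j - 1) = rho n (j - 1) * rho n k := comm_rho_rho h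
          rw [t2, lam_lt_rec hij1, lam_gt_rec hij1,
            lam_lt_rec (show tau k i + 1 < j from htb.2),
            lam_gt_rec (show tau k i + 1 < j from htb.2)]
          constructor
          · rw [conj_swap hab, H1]
          · rw [conj_swap hab, H2]

lemma conj_rho_lam {k i j : ℕ} (hk1 : 1 ≤ k) (hk2 : k ≤ n - 1) (hi1 : 1 ≤ i) (hi2 : i ≤ n)
    (hj1 : 1 ≤ j) (hj2 : j ≤ n) (hij : i ≠ j) :
    rho n k * lam n i j * rho n k = lam n (tau k i) (tau k j) := by
  rcases lt_or_gt_of_ne hij with h | h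
  · exact (key (j - i - 1) k i j (by omega) hk1 hk2 hi1 hj2).1
  · exact (key (i - j - 1) k j i (by omega) hk1 hk2 hj1 hi2).2


lemma swap_apply_tau {m : ℕ} (k i : ℕ) (hk1 : 1 ≤ k) (hk2 : k ≤ m)
    (hi1 : 1 ≤ i) (hi2 : i ≤ m + 1) :
    (((Equiv.swap (⟨k - 1, by omega⟩ : Fin (m + 1)) ⟨k, by omega⟩) ⟨i - 1, by omega⟩ :
        Fin (m + 1)) : ℕ) + 1 = tau k i := by
  by_cases hik : i = k
  · have e : (⟨i - 1, by omega⟩ : Fin (m + 1)) = ⟨k - 1, by omega⟩ := by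
      apply Fin.ext; simp; omega
    rw [e, Equiv.swap_apply_left]
    unfold tau; split_ifs <;> simp <;> omega
  · by_cases hik1 : i = k + 1
    · have e : (⟨i - 1, by omega⟩ : Fin (m + 1)) = ⟨k, by omega⟩ := by
        apply Fin.ext; simp; omega
      rw [e, Equiv.swap_apply_right]
      unfold tau; split_ifs <;> simp <;> omega
    · rw [Equiv.swap_apply_of_ne_of_ne]
      · unfold tau; split_ifs <;> simp <;> omega
      · simp [Fin.ext_iff]; omega
      · simp [Fin.ext_iff]; omega

end UVB

/-! ## Statement 3 -/

/-- For `n ≥ 2`, if `s : S_n →* UVB n` is the homomorphism with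
s((i,i+1)) = ρ_i, then for every π ∈ S_n and all 1 ≤ i ≠ j ≤ n one has
`s(π) λ_{i,j} s(π)⁻¹ = λ_{π(i),π(j)}` in `UVB n`. -/
theorem statement3 (n : ℕ) (hn : 2 ≤ n)
    (s : Equiv.Perm (Fin n) →* UVB n) (hs : IsPermSection n s)
    (π : Equiv.Perm (Fin n)) (i j : ℕ) (h1 : 1 ≤ i) (h2 : i ≤ n) (h3 : 1 ≤ j) (h4 : j ≤ n)
    (hij : i ≠ j) :
    s π * UVB.lam n i j * (s π)⁻¹ =
      UVB.lam n ((π ⟨i - 1, by omega⟩).val + 1) ((π ⟨j - 1, by omega⟩).val + 1) := by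
  obtain ⟨m, rfl⟩ : ∃ m, n = m + 1 := ⟨n - 1, by omega⟩
  suffices h : ∀ π' ∈ Submonoid.closure
      (Set.range fun i0 : Fin m => Equiv.swap i0.castSucc i0.succ),
      ∀ i j (_hi1 : 1 ≤ i) (_hi2 : i ≤ m + 1) (_hj1 : 1 ≤ j) (_hj2 : j ≤ m + 1) (_hij : i ≠ j),
      s π' * UVB.lam (m + 1) i j * (s π')⁻¹ =
        UVB.lam (m + 1) (((π' ⟨i - 1, by omega⟩ : Fin (m + 1)) : ℕ) + 1)
          (((π' ⟨j - 1, by omega⟩ : Fin (m + 1)) : ℕ) + 1) by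
    exact h π (by rw [Equiv.Perm.mclosure_swap_castSucc_succ]; trivial) i j h1 h2 h3 h4 hij
  intro π' hπ'
  induction hπ' using Submonoid.closure_induction with
  | mem x hx =>
    obtain ⟨i0, rfl⟩ := hx
    intro i j hi1 hi2 hj1 hj2 hij
    beta_reduce
    set k := (i0 : ℕ) + 1 with hk
    have hk1 : 1 ≤ k := by omega
    have hk2 : k ≤ m := by have := i0.isLt; omega
    have ecs : i0.castSucc = (⟨k - 1, by omega⟩ : Fin (m + 1)) := by
      apply Fin.ext; simp [hk]
    have esu : i0.succ = (⟨k, by omega⟩ : Fin (m + 1)) := by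
      apply Fin.ext; simp [hk]
    rw [ecs, esu, hs k hk1 hk2]
    rw [UVB.swap_apply_tau k i hk1 hk2 hi1 hi2, UVB.swap_apply_tau k j hk1 hk2 hj1 hj2]
    rw [UVB.rho_inv]
    exact UVB.conj_rho_lam hk1 (by omega) hi1 hi2 hj1 hj2 hij
  | one =>
    intro i j hi1 hi2 hj1 hj2 hij
    simp only [map_one, one_mul, inv_one, mul_one, Equiv.Perm.coe_one, id_eq]
    rw [show i - 1 + 1 = i from by omega, show j - 1 + 1 = j from by omega]
  | mul x y hx hy ihx ihy =>
    intro i j hi1 hi2 hj1 hj2 hij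
    have hne0 : (⟨i - 1, by omega⟩ : Fin (m + 1)) ≠ ⟨j - 1, by omega⟩ := by
      simp only [ne_eq, Fin.mk.injEq]; omega
    have hne : y ⟨i - 1, by omega⟩ ≠ y ⟨j - 1, by omega⟩ :=
      fun hcon => hne0 (y.injective hcon)
    have hneval : ((y ⟨i - 1, by omega⟩ : Fin (m + 1)) : ℕ) + 1 ≠
        ((y ⟨j - 1, by omega⟩ : Fin (m + 1)) : ℕ) + 1 := by
      intro hcon
      exact hne (Fin.ext (by omega))
    rw [map_mul, mul_inv_rev]
    have e1 : s x * s y * UVB.lam (m + 1) i j * ((s y)⁻¹ * (s x)⁻¹) =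
        s x * (s y * UVB.lam (m + 1) i j * (s y)⁻¹) * (s x)⁻¹ := by group
    rw [e1, ihy i j hi1 hi2 hj1 hj2 hij,
      ihx (((y ⟨i - 1, by omega⟩ : Fin (m + 1)) : ℕ) + 1)
        (((y ⟨j - 1, by omega⟩ : Fin (m + 1)) : ℕ) + 1)
        (by omega) (by have := (y ⟨i - 1, by omega⟩).isLt; omega)
        (by omega) (by have := (y ⟨j - 1, by omega⟩).isLt; omega) hneval]
    have e2 : (⟨((y ⟨i - 1, by omega⟩ : Fin (m + 1)) : ℕ) + 1 - 1, by
        have := (y ⟨i - 1, by omega⟩).isLt; omega⟩ : Fin (m + 1)) = y ⟨i - 1, by omega⟩ := by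
      apply Fin.ext; simp
    have e3 : (⟨((y ⟨j - 1, by omega⟩ : Fin (m + 1)) : ℕ) + 1 - 1, by
        have := (y ⟨j - 1, by omega⟩).isLt; omega⟩ : Fin (m + 1)) = y ⟨j - 1, by omega⟩ := by
      apply Fin.ext; simp
    rw [e2, e3]
    simp [Equiv.Perm.mul_apply]
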